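/- arXiv:2212.07747 — 7 statements merged into one kernel-verified Lean document; each statement's English description precedes it below -/
import Mathlib

section
/- Let d ≥ 2, r ≥ 1, and let x ∈ ℝ^d satisfy x_i > 0 for all i and ∑_{i=1}^d x_i = 1. Let Z ∈ ℝ^{d×r} have ∑_{i=1}^d Z_{ik} = 0 for every k = 1,…,r, and let c ∈ ℝ^d satisfy ∑_{i=1}^d c_i = 0. Let M be the (d−1)×(d−1) matrix M_{ij} = x_d^{-1} + x_i^{-1} δ_{ij}. Then the linear function φ ∈ ℝ^r ↦ ∑_{k=1}^r φ_k ∑_{i=1}^{d−1} ∑_{j=1}^{d−1} Z_{ik} M_{ij} c_j is independent of φ (equivalently, identically zero) if and only if ∑_{i=1}^d Z_{ik} c_i / x_i = 0 for every k = 1,…,r. -/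
/-- Robustness criterion. For `d = n + 1 ≥ 2`, `r ≥ 1`, `x` positive summing to 1,
`Z` with zero column sums and `c` with zero sum, the linear function
`φ ↦ ∑_k φ_k ∑_{i,j ≤ d-1} Z_{ik} M_{ij} c_j` (with `M_{ij} = x_d⁻¹ + x_i⁻¹ δ_{ij}`) is
identically zero if and only if `∑_i Z_{ik} c_i / x_i = 0` for every `k`. -/
theorem robustness_criterion (n r : ℕ) (hn : 1 ≤ n) (hr : 1 ≤ r)
    (x : Fin (n + 1) → ℝ) (hx : ∀ i, 0 < x i) (hsum : ∑ i, x i = 1)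
    (Z : Fin (n + 1) → Fin r → ℝ) (hZ : ∀ k, ∑ i, Z i k = 0)
    (c : Fin (n + 1) → ℝ) (hc : ∑ i, c i = 0) :
    (∀ φ : Fin r → ℝ,
        ∑ k, φ k *
          ∑ i : Fin n, ∑ j : Fin n,
            Z i.castSucc k *
              ((x (Fin.last n))⁻¹ + (x i.castSucc)⁻¹ * (if i = j then (1 : ℝ) else 0)) *
              c j.castSucc = 0)
      ↔ (∀ k, ∑ i, Z i k * c i / x i = 0) := by
  have hcn : ∑ j : Fin n, c j.castSucc = - c (Fin.last n) := by
    have := hc; rw [Fin.sum_univ_castSucc] at this; linarith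
  have key : ∀ k, (∑ i : Fin n, ∑ j : Fin n,
      Z i.castSucc k *
        ((x (Fin.last n))⁻¹ + (x i.castSucc)⁻¹ * (if i = j then (1 : ℝ) else 0)) *
        c j.castSucc) = ∑ i, Z i k * c i / x i := by
    intro k
    have hZn : ∑ i : Fin n, Z i.castSucc k = - Z (Fin.last n) k := by
      have := hZ k; rw [Fin.sum_univ_castSucc] at this; linarith
    have h1 : ∀ i : Fin n, (∑ j : Fin n,
        Z i.castSucc k *
          ((x (Fin.last n))⁻¹ + (x i.castSucc)⁻¹ * (if i = j then (1 : ℝ) else 0)) *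
          c j.castSucc)
        = Z i.castSucc k * (x (Fin.last n))⁻¹ * (∑ j : Fin n, c j.castSucc)
          + Z i.castSucc k * (x i.castSucc)⁻¹ * c i.castSucc := by
      intro i
      rw [Finset.mul_sum]
      rw [show (∑ j : Fin n, Z i.castSucc k * (x (Fin.last n))⁻¹ * c j.castSucc)
            + Z i.castSucc k * (x i.castSucc)⁻¹ * c i.castSucc
          = ∑ j : Fin n, (Z i.castSucc k * (x (Fin.last n))⁻¹ * c j.castSucc
            + if i = j then Z i.castSucc k * (x i.castSucc)⁻¹ * c j.castSucc else 0) by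
        rw [Finset.sum_add_distrib, Finset.sum_ite_eq, if_pos (Finset.mem_univ i)]]
      refine Finset.sum_congr rfl fun j _ => ?_
      by_cases h : i = j
      · simp [h]; ring
      · simp [h]
    rw [Finset.sum_congr rfl fun i _ => h1 i, Finset.sum_add_distrib,
      ← Finset.sum_mul, ← Finset.sum_mul, hZn, hcn]
    rw [Fin.sum_univ_castSucc (f := fun i => Z i k * c i / x i)]
    have : ∀ i : Fin (n+1), Z i k * c i / x i = Z i k * (x i)⁻¹ * c i := by
      intro i; rw [div_eq_mul_inv]; ring
    simp only [this]
    ring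
  constructor
  · intro h k
    have := h (fun j => if j = k then 1 else 0)
    simp only [key] at this
    simpa using this
  · intro h φ
    simp only [key, h, mul_zero, Finset.sum_const_zero]
end

section
/- Let d ≥ 1 and let x ∈ ℝ^d satisfy x_i ≥ 0 for all i and ∑_{i=1}^d x_i = 1. Define the d×d matrix σ(x) by σ(x)_{ij} = √(x_i)(δ_{ij} − √(x_i x_j)). Then σ(x) σ(x)^T = V(x), where V(x)_{ij} = x_i(δ_{ij} − x_j). -/
/-- Pal's square-root decomposition of the Wright--Fisher covariance matrix:
for `x` nonnegative summing to 1 and `σ(x)_{ij} = √(x_i)(δ_{ij} − √(x_i x_j))`, we have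
`σ(x) σ(x)ᵀ = V(x)` where `V(x)_{ij} = x_i(δ_{ij} − x_j)`. -/
theorem pal_decomposition (d : ℕ) (hd : 1 ≤ d)
    (x : Fin d → ℝ) (hx : ∀ i, 0 ≤ x i) (hsum : ∑ i, x i = 1)
    (σ V : Matrix (Fin d) (Fin d) ℝ)
    (hσ : ∀ i j, σ i j =
      Real.sqrt (x i) * ((if i = j then (1 : ℝ) else 0) - Real.sqrt (x i * x j)))
    (hV : ∀ i j, V i j = x i * ((if i = j then (1 : ℝ) else 0) - x j)) :
    σ * σ.transpose = V := by
  have hsq : ∀ k, Real.sqrt (x k) * Real.sqrt (x k) = x k :=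
    fun k => Real.mul_self_sqrt (hx k)
  ext i j
  simp only [Matrix.mul_apply, Matrix.transpose_apply, hσ, hV]
  have step : ∀ k, (Real.sqrt (x i) * ((if i = k then (1:ℝ) else 0) - Real.sqrt (x i * x k))) *
      (Real.sqrt (x j) * ((if j = k then (1:ℝ) else 0) - Real.sqrt (x j * x k)))
      = ((if i = k then Real.sqrt (x i) else 0) - x i * Real.sqrt (x k)) *
        ((if j = k then Real.sqrt (x j) else 0) - x j * Real.sqrt (x k)) := by
    intro k
    rw [Real.sqrt_mul (hx i), Real.sqrt_mul (hx j)]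
    set a := Real.sqrt (x i) with ha
    set b := Real.sqrt (x j) with hb
    set c := Real.sqrt (x k) with hc
    have hi : a * a = x i := hsq i
    have hj : b * b = x j := hsq j
    rw [← hi, ← hj]
    split_ifs <;> ring
  rw [Finset.sum_congr rfl (fun k _ => step k)]
  simp only [sub_mul, mul_sub, Finset.sum_sub_distrib, ite_mul, mul_ite, zero_mul, mul_zero,
    Finset.sum_ite_eq, Finset.sum_ite_eq', Finset.mem_univ, if_true]
  have h4 : ∑ k, x i * Real.sqrt (x k) * (x j * Real.sqrt (x k)) = x i * x j := by
    have key : ∀ k, x i * Real.sqrt (x k) * (x j * Real.sqrt (x k)) = x i * x j * x k := by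
      intro k
      set c := Real.sqrt (x k) with hc
      have hk : c * c = x k := hsq k
      rw [← hk]; ring
    rw [Finset.sum_congr rfl (fun k _ => key k), ← Finset.mul_sum, hsum, mul_one]
  rw [h4]
  set a := Real.sqrt (x i) with ha
  set b := Real.sqrt (x j) with hb
  have hi : a * a = x i := hsq i
  have hj : b * b = x j := hsq j
  split_ifs with h1
  · subst h1; rw [← hi]; ring
  · rw [← hi, ← hj]; ring
end

section
/- Fix integers K, L ≥ 1 and let x = (x_{ij}) ∈ ℝ^{K×L} satisfy x_{ij} ≥ 0 for all i,j and ∑_{i=1}^K ∑_{j=1}^L x_{ij} = 1, with marginals x_{i·} = ∑_{j} x_{ij} and x_{·j} = ∑_{i} x_{ij}. Let s^A ∈ ℝ^{K×K} and s^B ∈ ℝ^{L×L} be arbitrary, and define the non-epistatic selection coefficients s_{ij,kl} = s^A_{ik} + s^B_{jl}. Then ∑_{i=1}^K ∑_{j=1}^L (x_{i·} x_{·j} − x_{ij}) ∑_{k=1}^K ∑_{l=1}^L s_{ij,kl} x_{kl} = 0. -/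
/-!
Write `D i j = x_{i·} x_{·j} - x_{ij}` for the recombination drift. When the total mass is `1`,
the product of the marginals has the same marginals as `x`, so every row and every column of
`D` sums to zero. Non-epistatic selection makes the marginal fitness of `(i, j)` additive,
`a i + b j`, and an array with vanishing row and column sums is orthogonal to every additive
function.
-/

open Finset

section

variable {ι κ R : Type*} [Fintype ι] [Fintype κ] [CommRing R]

def rowMarginal (x : ι → κ → R) (i : ι) : R := ∑ j, x i j

def colMarginal (x : ι → κ → R) (j : κ) : R := ∑ i, x i j

def recombinationDrift (x : ι → κ → R) (i : ι) (j : κ) : R :=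
  rowMarginal x i * colMarginal x j - x i j

lemma sum_colMarginal (x : ι → κ → R) : ∑ j, colMarginal x j = ∑ i, ∑ j, x i j :=
  sum_comm

lemma sum_recombinationDrift_row {x : ι → κ → R} (hx : ∑ i, ∑ j, x i j = 1) (i : ι) :
    ∑ j, recombinationDrift x i j = 0 := by
  simp only [recombinationDrift, sum_sub_distrib, ← mul_sum, sum_colMarginal, hx, mul_one]
  exact sub_self _

lemma sum_recombinationDrift_col {x : ι → κ → R} (hx : ∑ i, ∑ j, x i j = 1) (j : κ) :
    ∑ i, recombinationDrift x i j = 0 := by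
  simp only [recombinationDrift, sum_sub_distrib, ← sum_mul]
  rw [show ∑ i, rowMarginal x i = 1 from hx, one_mul]
  exact sub_self _

lemma sum_sum_mul_add_eq_zero {D : ι → κ → R} (hrow : ∀ i, ∑ j, D i j = 0)
    (hcol : ∀ j, ∑ i, D i j = 0) (a : ι → R) (b : κ → R) :
    ∑ i, ∑ j, D i j * (a i + b j) = 0 := by
  simp only [mul_add, sum_add_distrib, ← sum_mul]
  rw [sum_comm (f := fun i j => D i j * b j)]
  simp only [← sum_mul, hrow, hcol, zero_mul, sum_const_zero, add_zero]

lemma sum_sum_nonepistatic_mul (x : ι → κ → R) (sA : ι → ι → R) (sB : κ → κ → R)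
    (i : ι) (j : κ) :
    ∑ k, ∑ l, (sA i k + sB j l) * x k l
      = ∑ k, sA i k * rowMarginal x k + ∑ l, sB j l * colMarginal x l := by
  simp only [add_mul, sum_add_distrib, rowMarginal, colMarginal, mul_sum]
  rw [sum_comm (f := fun k l => sB j l * x k l)]

end

theorem recombination_robust_to_nonepistatic_selection_general (K L : ℕ)
    (x : Fin K → Fin L → ℝ)
    (hsum : ∑ i, ∑ j, x i j = 1)
    (sA : Fin K → Fin K → ℝ) (sB : Fin L → Fin L → ℝ) :
    ∑ i, ∑ j, ((∑ j', x i j') * (∑ i', x i' j) - x i j) *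
        (∑ k, ∑ l, (sA i k + sB j l) * x k l) = 0 := by
  simp only [sum_sum_nonepistatic_mul]
  exact sum_sum_mul_add_eq_zero (sum_recombinationDrift_row hsum)
    (sum_recombinationDrift_col hsum) _ _

/-- Robustness of the recombination MLE to non-epistatic selection. For a
nonnegative two-locus frequency array summing to 1 and non-epistatic selection coefficients
`s_{ij,kl} = s^A_{ik} + s^B_{jl}`,
`∑_{i,j} (x_{i·} x_{·j} − x_{ij}) ∑_{k,l} s_{ij,kl} x_{kl} = 0`. -/
theorem recombination_robust_to_nonepistatic_selection (K L : ℕ) (hK : 1 ≤ K) (hL : 1 ≤ L)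
    (x : Fin K → Fin L → ℝ) (hx : ∀ i j, 0 ≤ x i j)
    (hsum : ∑ i, ∑ j, x i j = 1)
    (sA : Fin K → Fin K → ℝ) (sB : Fin L → Fin L → ℝ) :
    ∑ i, ∑ j, ((∑ j', x i j') * (∑ i', x i' j) - x i j) *
        (∑ k, ∑ l, (sA i k + sB j l) * x k l) = 0 :=
  recombination_robust_to_nonepistatic_selection_general K L x hsum sA sB
end

section
/- Fix integers K, L ≥ 1 and let x = (x_{ij}) ∈ ℝ^{K×L} satisfy x_{ij} > 0 for all i,j and ∑_{i,j} x_{ij} = 1, with marginals x_{i·} = ∑_{j} x_{ij} and x_{·j} = ∑_{i} x_{ij}. Then for every ρ ∈ ℝ and every k ∈ {1,…,K}: ∑_{i=1}^K ∑_{j=1}^L (1/x_{ij}) · (x_{ij}/2)(δ_{ik} − x_{k·}) · ρ(x_{i·} x_{·j} − x_{ij}) = 0, where δ_{ik} is the Kronecker delta. -/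
/-- Robustness of the genic-selection estimator at locus A to recombination:
for strictly positive two-locus frequencies summing to 1, every `ρ ∈ ℝ` and `k`,
`∑_{i,j} (1/x_{ij}) · (x_{ij}/2)(δ_{ik} − x_{k·}) · ρ(x_{i·} x_{·j} − x_{ij}) = 0`. -/
theorem selection_robust_to_recombination (K L : ℕ) (hK : 1 ≤ K) (hL : 1 ≤ L)
    (x : Fin K → Fin L → ℝ) (hx : ∀ i j, 0 < x i j)
    (hsum : ∑ i, ∑ j, x i j = 1) (ρ : ℝ) (k : Fin K) :
    ∑ i, ∑ j, (1 / x i j) *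
        (x i j / 2 * ((if i = k then (1 : ℝ) else 0) - ∑ j', x k j')) *
        (ρ * ((∑ j', x i j') * (∑ i', x i' j) - x i j)) = 0 := by
  have hsum' : ∑ j, ∑ i, x i j = 1 := by rw [Finset.sum_comm]; exact hsum
  apply Finset.sum_eq_zero
  intro i _
  have hterm : ∀ j : Fin L, (1 / x i j) *
      (x i j / 2 * ((if i = k then (1 : ℝ) else 0) - ∑ j', x k j')) *
      (ρ * ((∑ j', x i j') * (∑ i', x i' j) - x i j)) =
      ((if i = k then (1 : ℝ) else 0) - ∑ j', x k j') / 2 * ρ *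
      ((∑ j', x i j') * (∑ i', x i' j) - x i j) := by
    intro j
    have hne := (hx i j).ne'
    field_simp
  calc ∑ j, (1 / x i j) *
      (x i j / 2 * ((if i = k then (1 : ℝ) else 0) - ∑ j', x k j')) *
      (ρ * ((∑ j', x i j') * (∑ i', x i' j) - x i j))
      = ∑ j, ((if i = k then (1 : ℝ) else 0) - ∑ j', x k j') / 2 * ρ *
        ((∑ j', x i j') * (∑ i', x i' j) - x i j) := by
        exact Finset.sum_congr rfl fun j _ => hterm j
    _ = ((if i = k then (1 : ℝ) else 0) - ∑ j', x k j') / 2 * ρ *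
        ((∑ j', x i j') * (∑ j, ∑ i', x i' j) - ∑ j, x i j) := by
        rw [← Finset.mul_sum, Finset.sum_sub_distrib, ← Finset.mul_sum]
    _ = 0 := by rw [hsum']; ring
end

section
/- Fix integers K, L ≥ 1, let x = (x_{ij}) ∈ ℝ^{K×L} satisfy x_{ij} > 0 for all i,j and ∑_{i,j} x_{ij} = 1, with marginals x_{i·} = ∑_{j} x_{ij} and x_{·j} = ∑_{i} x_{ij}. Let P^A ∈ ℝ^{K×K} be a row-stochastic matrix (∑_{i=1}^K P^A_{ki} = 1 for each k) and let s^B ∈ ℝ^L be arbitrary. Then for every i' ∈ {1,…,K}: ∑_{i=1}^K ∑_{j=1}^L (1/x_{ij}) · [(1/2) ∑_{k=1}^K x_{kj}(P^A_{ki} − δ_{ik})] · [(x_{ij}/2)(s^B_j − ∑_{l=1}^L s^B_l x_{·l})] = 0, where the middle factor is evaluated with mutation target allele i and δ_{ik} is the Kronecker delta (the sum over i,j on the left is of the product of the per-haplotype mutation-drift derivative and the selection drift). -/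
/-- Robustness of mutation-rate estimation at locus A to genic selection at
locus B: for strictly positive two-locus frequencies summing to 1, a row-stochastic mutation
matrix `P^A`, arbitrary selection coefficients `s^B`, and every `i'`,
`∑_{i,j} (1/x_{ij}) · [(1/2) ∑_k x_{kj}(P^A_{ki} − δ_{ik})] ·
  [(x_{ij}/2)(s^B_j − ∑_l s^B_l x_{·l})] = 0`. -/
theorem mutation_robust_to_selection_other_locus (K L : ℕ) (hK : 1 ≤ K) (hL : 1 ≤ L)
    (x : Fin K → Fin L → ℝ) (hx : ∀ i j, 0 < x i j)
    (hsum : ∑ i, ∑ j, x i j = 1)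
    (PA : Fin K → Fin K → ℝ) (hPA : ∀ k, ∑ i, PA k i = 1)
    (sB : Fin L → ℝ) (i' : Fin K) :
    ∑ i, ∑ j, (1 / x i j) *
        ((1 / 2) * ∑ k, x k j * (PA k i - (if i = k then (1 : ℝ) else 0))) *
        (x i j / 2 * (sB j - ∑ l, sB l * (∑ i'', x i'' l))) = 0 := by
  rw [Finset.sum_comm]
  apply Finset.sum_eq_zero
  intro j _
  have hne : ∀ i, x i j ≠ 0 := fun i => (hx i j).ne'
  have key : ∀ i : Fin K, (1 / x i j) *
        ((1 / 2) * ∑ k, x k j * (PA k i - (if i = k then (1 : ℝ) else 0))) *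
        (x i j / 2 * (sB j - ∑ l, sB l * (∑ i'', x i'' l)))
      = (∑ k, x k j * (PA k i - (if i = k then (1 : ℝ) else 0))) *
        ((sB j - ∑ l, sB l * (∑ i'', x i'' l)) / 4) := by
    intro i
    field_simp [hne i]
    ring
  simp only [key, ← Finset.sum_mul]
  have : ∑ i : Fin K, ∑ k, x k j * (PA k i - (if i = k then (1 : ℝ) else 0)) = 0 := by
    rw [Finset.sum_comm]
    apply Finset.sum_eq_zero
    intro k _
    rw [← Finset.mul_sum]
    simp [Finset.sum_sub_distrib, hPA k]
  rw [this, zero_mul]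
end

section
/- Fix integers K, L ≥ 1, let x = (x_{ij}) ∈ ℝ^{K×L} satisfy x_{ij} > 0 for all i,j and ∑_{i,j} x_{ij} = 1, with marginals x_{i·} = ∑_{j} x_{ij} and x_{·j} = ∑_{i} x_{ij}. Let P^B ∈ ℝ^{L×L} be a row-stochastic matrix (∑_{j=1}^L P^B_{lj} = 1 for each l) and let θ_B ∈ ℝ. Then for every k ∈ {1,…,K}: ∑_{i=1}^K ∑_{j=1}^L (1/x_{ij}) · [(x_{ij}/2)(δ_{ik} − x_{k·})] · [(θ_B/2) ∑_{l=1}^L x_{il}(P^B_{lj} − δ_{jl})] = 0, where δ denotes the Kronecker delta. -/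
/-- Robustness of genic-selection estimation at locus A to mutation at locus B:
for strictly positive two-locus frequencies summing to 1, a row-stochastic mutation matrix
`P^B`, any rate `θ_B` and every `k`,
`∑_{i,j} (1/x_{ij}) · (x_{ij}/2)(δ_{ik} − x_{k·}) ·
  (θ_B/2) ∑_l x_{il}(P^B_{lj} − δ_{jl}) = 0`. -/
theorem selection_robust_to_mutation_other_locus (K L : ℕ) (hK : 1 ≤ K) (hL : 1 ≤ L)
    (x : Fin K → Fin L → ℝ) (hx : ∀ i j, 0 < x i j)
    (hsum : ∑ i, ∑ j, x i j = 1)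
    (PB : Fin L → Fin L → ℝ) (hPB : ∀ l, ∑ j, PB l j = 1)
    (θB : ℝ) (k : Fin K) :
    ∑ i, ∑ j, (1 / x i j) *
        (x i j / 2 * ((if i = k then (1 : ℝ) else 0) - ∑ j', x k j')) *
        (θB / 2 * ∑ l, x i l * (PB l j - (if j = l then (1 : ℝ) else 0))) = 0 := by
  apply Finset.sum_eq_zero
  intro i _
  have key : ∑ j, ∑ l, x i l * (PB l j - (if j = l then (1 : ℝ) else 0)) = 0 := by
    rw [Finset.sum_comm]
    apply Finset.sum_eq_zero
    intro l _
    have : ∑ j, x i l * (PB l j - (if j = l then (1 : ℝ) else 0))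
        = x i l * ((∑ j, PB l j) - 1) := by
      rw [← Finset.mul_sum, Finset.sum_sub_distrib]
      simp
    rw [this, hPB, sub_self, mul_zero]
  have heq : ∀ j, (1 / x i j) *
        (x i j / 2 * ((if i = k then (1 : ℝ) else 0) - ∑ j', x k j')) *
        (θB / 2 * ∑ l, x i l * (PB l j - (if j = l then (1 : ℝ) else 0)))
      = (((if i = k then (1 : ℝ) else 0) - ∑ j', x k j') * (θB / 4)) *
        (∑ l, x i l * (PB l j - (if j = l then (1 : ℝ) else 0))) := by
    intro j
    have := (hx i j).ne'
    field_simp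
    ring
  simp only [heq, ← Finset.mul_sum, key, mul_zero]
end

section
/- Fix integers K, L ≥ 1, ρ > 0 and T > 0. Let x : [0,∞) → ℝ^{K×L} be differentiable solving dx_{ij}/dt = ρ(x_{i·}(t) x_{·j}(t) − x_{ij}(t)) for all t ≥ 0 and all i,j, where x_{i·}(t) = ∑_{j=1}^L x_{ij}(t) and x_{·j}(t) = ∑_{i=1}^K x_{ij}(t), with x_{ij}(0) > 0 for all i,j and ∑_{i,j} x_{ij}(0) = 1. Define the accumulated information I_T = ∫_0^T ∑_{i=1}^K ∑_{j=1}^L (x_{ij}(t) − x_{i·}(t)x_{·j}(t))^2 / x_{ij}(t) dt. Then I_T = ρ^{-1} ∑_{i=1}^K ∑_{j=1}^L x_{i·}(0) x_{·j}(0) log(x_{ij}(T)/x_{ij}(0)). -/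
open Set Finset

/-! The total mass `S = ∑ x_{ij}` satisfies `S' = ρ S (S - 1)` with `S(0) = 1`, so `S ≡ 1` by
Grönwall, and then the marginals `x_{i·}`, `x_{·j}` are constant. Each `x_{ij}` therefore relaxes
exponentially towards `x_{i·}(0) x_{·j}(0)` and stays positive, and
`ρ⁻¹ ∑ (x_{i·}(0) x_{·j}(0) log x_{ij} - x_{ij})` is an antiderivative of the integrand; its linear
part contributes nothing between `0` and `T` because the mass is conserved. -/

theorem eq_zero_of_hasDerivAt_mul_self {f c : ℝ → ℝ} {a b : ℝ} (hc : ContinuousOn c (Icc a b))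
    (hf : ∀ t ∈ Icc a b, HasDerivAt f (c t * f t) t) (ha : f a = 0) :
    ∀ t ∈ Icc a b, f t = 0 := by
  obtain ⟨C, hC⟩ := isCompact_Icc.exists_bound_of_continuousOn hc
  refine eq_zero_of_abs_deriv_le_mul_abs_self_of_eq_zero_right (K := C) (HasDerivAt.continuousOn hf)
    (fun t ht => (hf t (Ico_subset_Icc_self ht)).hasDerivWithinAt) ha fun t ht => ?_
  rw [norm_mul]
  exact mul_le_mul_of_nonneg_right (hC t (Ico_subset_Icc_self ht)) (norm_nonneg _)

variable {ι κ : Type*} [Fintype ι] [Fintype κ]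

theorem sum_sum_rowSum_mul_colSum (y : ι → κ → ℝ) :
    ∑ i, ∑ j, (∑ j', y i j') * (∑ i', y i' j) = (∑ i, ∑ j, y i j) * (∑ i, ∑ j, y i j) := by
  rw [← Finset.sum_mul_sum, Finset.sum_comm]

theorem sum_sum_mul_log_sub_sub {w y z : ι → κ → ℝ} (hy : ∀ i j, 0 < y i j)
    (hz : ∀ i j, 0 < z i j) (hyz : ∑ i, ∑ j, y i j = ∑ i, ∑ j, z i j) :
    ∑ i, ∑ j, (w i j * Real.log (y i j) - y i j) - ∑ i, ∑ j, (w i j * Real.log (z i j) - z i j)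
      = ∑ i, ∑ j, w i j * Real.log (y i j / z i j) := by
  simp only [Finset.sum_sub_distrib, Real.log_div (hy _ _).ne' (hz _ _).ne', mul_sub, hyz]
  ring

def IsRecombinationSolution (ρ : ℝ) (x : ℝ → ι → κ → ℝ) : Prop :=
  ∀ t, 0 ≤ t → ∀ i j, HasDerivAt (fun s => x s i j)
    (ρ * ((∑ j', x t i j') * (∑ i', x t i' j) - x t i j)) t

namespace IsRecombinationSolution

variable {ρ t : ℝ} {x : ℝ → ι → κ → ℝ}

theorem hasDerivAt_totalMass (hx : IsRecombinationSolution ρ x) (ht : 0 ≤ t) :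
    HasDerivAt (fun s => ∑ i, ∑ j, x s i j)
      (ρ * (∑ i, ∑ j, x t i j) * ((∑ i, ∑ j, x t i j) - 1)) t := by
  refine (HasDerivAt.fun_sum fun i _ => HasDerivAt.fun_sum fun j _ => hx t ht i j).congr_deriv ?_
  calc ∑ i, ∑ j, ρ * ((∑ j', x t i j') * (∑ i', x t i' j) - x t i j)
      = ρ * (∑ i, ∑ j, (∑ j', x t i j') * (∑ i', x t i' j) - ∑ i, ∑ j, x t i j) := by
        simp only [Finset.mul_sum, Finset.sum_sub_distrib, mul_sub]
    _ = _ := by rw [sum_sum_rowSum_mul_colSum]; ring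

theorem totalMass_eq_one (hx : IsRecombinationSolution ρ x) (h0 : ∑ i, ∑ j, x 0 i j = 1)
    (ht : 0 ≤ t) : ∑ i, ∑ j, x t i j = 1 := by
  have hderiv (s : ℝ) (hs : s ∈ Icc 0 t) := hx.hasDerivAt_totalMass hs.1
  have := eq_zero_of_hasDerivAt_mul_self (f := fun s => ∑ i, ∑ j, x s i j - 1)
    (continuous_const.continuousOn.mul (HasDerivAt.continuousOn hderiv))
    (fun s hs => (hderiv s hs).sub_const 1) (sub_eq_zero.2 h0) t ⟨ht, le_rfl⟩
  exact sub_eq_zero.1 this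

theorem hasDerivAt_rowSum (hx : IsRecombinationSolution ρ x) (ht : 0 ≤ t) (i : ι) :
    HasDerivAt (fun s => ∑ j, x s i j)
      (ρ * (∑ j, x t i j) * ((∑ i, ∑ j, x t i j) - 1)) t := by
  refine (HasDerivAt.fun_sum fun j _ => hx t ht i j).congr_deriv ?_
  rw [Finset.sum_comm (f := fun i j => x t i j)]
  simp only [← Finset.mul_sum, Finset.sum_sub_distrib]
  ring

theorem hasDerivAt_colSum (hx : IsRecombinationSolution ρ x) (ht : 0 ≤ t) (j : κ) :
    HasDerivAt (fun s => ∑ i, x s i j)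
      (ρ * (∑ i, x t i j) * ((∑ i, ∑ j, x t i j) - 1)) t := by
  refine (HasDerivAt.fun_sum fun i _ => hx t ht i j).congr_deriv ?_
  simp only [← Finset.mul_sum, ← Finset.sum_mul, Finset.sum_sub_distrib]
  ring

theorem rowSum_eq (hx : IsRecombinationSolution ρ x) (h0 : ∑ i, ∑ j, x 0 i j = 1)
    (ht : 0 ≤ t) (i : ι) : ∑ j, x t i j = ∑ j, x 0 i j :=
  constant_of_has_deriv_right_zero
    (HasDerivAt.continuousOn fun s hs => hx.hasDerivAt_rowSum hs.1 i)
    (fun s hs => by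
      simpa [hx.totalMass_eq_one h0 hs.1] using (hx.hasDerivAt_rowSum hs.1 i).hasDerivWithinAt)
    t ⟨ht, le_rfl⟩

theorem colSum_eq (hx : IsRecombinationSolution ρ x) (h0 : ∑ i, ∑ j, x 0 i j = 1)
    (ht : 0 ≤ t) (j : κ) : ∑ i, x t i j = ∑ i, x 0 i j :=
  constant_of_has_deriv_right_zero
    (HasDerivAt.continuousOn fun s hs => hx.hasDerivAt_colSum hs.1 j)
    (fun s hs => by
      simpa [hx.totalMass_eq_one h0 hs.1] using (hx.hasDerivAt_colSum hs.1 j).hasDerivWithinAt)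
    t ⟨ht, le_rfl⟩

theorem eq_explicit_solution (hx : IsRecombinationSolution ρ x) (h0 : ∑ i, ∑ j, x 0 i j = 1)
    (ht : 0 ≤ t) (i : ι) (j : κ) :
    x t i j = x 0 i j * Real.exp (-ρ * t)
      + (∑ j', x 0 i j') * (∑ i', x 0 i' j) * (1 - Real.exp (-ρ * t)) := by
  set w := (∑ j', x 0 i j') * (∑ i', x 0 i' j)
  have hexp (s : ℝ) : HasDerivAt (fun s => Real.exp (-ρ * s)) (Real.exp (-ρ * s) * -ρ) s := by
    simpa using ((hasDerivAt_id s).const_mul (-ρ)).exp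
  have hderiv (s : ℝ) (hs : s ∈ Icc 0 t) :
      HasDerivAt (fun s => x s i j - (x 0 i j * Real.exp (-ρ * s) + w * (1 - Real.exp (-ρ * s))))
        (-ρ * (x s i j - (x 0 i j * Real.exp (-ρ * s) + w * (1 - Real.exp (-ρ * s))))) s := by
    refine ((hx s hs.1 i j).sub (((hexp s).const_mul _).add
      (((hexp s).const_sub 1).const_mul w))).congr_deriv ?_
    rw [hx.rowSum_eq h0 hs.1, hx.colSum_eq h0 hs.1]
    ring
  have := eq_zero_of_hasDerivAt_mul_self continuousOn_const hderiv (by simp) t ⟨ht, le_rfl⟩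
  exact sub_eq_zero.1 this

theorem pos (hx : IsRecombinationSolution ρ x) (hρ : 0 ≤ ρ) (h0 : ∑ i, ∑ j, x 0 i j = 1)
    (hx0 : ∀ i j, 0 < x 0 i j) (ht : 0 ≤ t) (i : ι) (j : κ) : 0 < x t i j := by
  have hexp_le : Real.exp (-ρ * t) ≤ 1 := Real.exp_le_one_iff.2 (by nlinarith)
  rw [hx.eq_explicit_solution h0 ht]
  have hw : 0 ≤ (∑ j', x 0 i j') * (∑ i', x 0 i' j) :=
    mul_nonneg (sum_nonneg fun _ _ => (hx0 _ _).le) (sum_nonneg fun _ _ => (hx0 _ _).le)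
  exact add_pos_of_pos_of_nonneg (mul_pos (hx0 i j) (Real.exp_pos _))
    (mul_nonneg hw (sub_nonneg.2 hexp_le))

theorem hasDerivAt_sum_sum_mul_log_sub (hx : IsRecombinationSolution ρ x)
    (h0 : ∑ i, ∑ j, x 0 i j = 1) (ht : 0 ≤ t) (hpos : ∀ i j, 0 < x t i j) :
    HasDerivAt (fun s => ∑ i, ∑ j,
        ((∑ j', x 0 i j') * (∑ i', x 0 i' j) * Real.log (x s i j) - x s i j))
      (ρ * ∑ i, ∑ j, (x t i j - (∑ j', x t i j') * (∑ i', x t i' j)) ^ 2 / x t i j) t := by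
  refine (HasDerivAt.fun_sum fun i _ => HasDerivAt.fun_sum fun j _ =>
    (((hx t ht i j).log (hpos i j).ne').const_mul _).sub (hx t ht i j)).congr_deriv ?_
  simp only [hx.rowSum_eq h0 ht, hx.colSum_eq h0 ht, Finset.mul_sum]
  refine Finset.sum_congr rfl fun i _ => Finset.sum_congr rfl fun j _ => ?_
  field_simp [(hpos i j).ne']
  ring

end IsRecombinationSolution

theorem deterministic_information_formula_general (K L : ℕ)
    (ρ T : ℝ) (hρ : 0 < ρ) (hT : 0 < T)
    (x : ℝ → Fin K → Fin L → ℝ)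
    (hode : ∀ t, 0 ≤ t → ∀ i j, HasDerivAt (fun s => x s i j)
      (ρ * ((∑ j', x t i j') * (∑ i', x t i' j) - x t i j)) t)
    (hx0 : ∀ i j, 0 < x 0 i j) (hsum0 : ∑ i, ∑ j, x 0 i j = 1) :
    (∫ t in (0 : ℝ)..T,
        ∑ i, ∑ j, (x t i j - (∑ j', x t i j') * (∑ i', x t i' j)) ^ 2 / x t i j)
      = ρ⁻¹ * ∑ i, ∑ j,
          (∑ j', x 0 i j') * (∑ i', x 0 i' j) * Real.log (x T i j / x 0 i j) := by
  have hx : IsRecombinationSolution ρ x := hode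
  have hpos (t : ℝ) (ht : 0 ≤ t) := hx.pos hρ.le hsum0 hx0 ht
  have hF (t : ℝ) (ht : 0 ≤ t) :=
    ((hx.hasDerivAt_sum_sum_mul_log_sub hsum0 ht (hpos t ht)).const_mul ρ⁻¹).congr_deriv
      (inv_mul_cancel_left₀ hρ.ne' _)
  have hcont := HasDerivAt.continuousOn fun t (ht : t ∈ Icc 0 T) => hF t ht.1
  have hderiv (t : ℝ) (ht : t ∈ Ioo 0 T) := hF t ht.1.le
  have hint := intervalIntegral.integrableOn_deriv_of_nonneg hcont hderiv
    fun t ht => sum_nonneg fun i _ => sum_nonneg fun j _ =>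
      div_nonneg (sq_nonneg _) (hpos t ht.1.le i j).le
  rw [intervalIntegral.integral_eq_sub_of_hasDerivAt_of_le hT.le hcont hderiv
    ((intervalIntegrable_iff_integrableOn_Ioc_of_le hT.le).2 hint), ← mul_sub,
    sum_sum_mul_log_sub_sub (hpos T hT.le) hx0 (by rw [hx.totalMass_eq_one hsum0 hT.le, hsum0])]

/-- Along a differentiable solution of the deterministic recombination
equation with `ρ > 0`, strictly positive initial frequencies summing to 1, the accumulated
information satisfies
`I_T = ∫_0^T ∑_{i,j} (x_{ij} − x_{i·}x_{·j})²/x_{ij} dt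
     = ρ⁻¹ ∑_{i,j} x_{i·}(0) x_{·j}(0) log(x_{ij}(T)/x_{ij}(0))`. -/
theorem deterministic_information_formula (K L : ℕ) (hK : 1 ≤ K) (hL : 1 ≤ L)
    (ρ T : ℝ) (hρ : 0 < ρ) (hT : 0 < T)
    (x : ℝ → Fin K → Fin L → ℝ)
    (hode : ∀ t, 0 ≤ t → ∀ i j, HasDerivAt (fun s => x s i j)
      (ρ * ((∑ j', x t i j') * (∑ i', x t i' j) - x t i j)) t)
    (hx0 : ∀ i j, 0 < x 0 i j) (hsum0 : ∑ i, ∑ j, x 0 i j = 1) :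
    (∫ t in (0 : ℝ)..T,
        ∑ i, ∑ j, (x t i j - (∑ j', x t i j') * (∑ i', x t i' j)) ^ 2 / x t i j)
      = ρ⁻¹ * ∑ i, ∑ j,
          (∑ j', x 0 i j') * (∑ i', x 0 i' j) * Real.log (x T i j / x 0 i j) :=
  deterministic_information_formula_general K L ρ T hρ hT x hode hx0 hsum0
end
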